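/- arXiv:2301.03190 — 4 statements merged into one kernel-verified Lean document; each statement's English description precedes it below -/
import Mathlib

section
/- For all x, y in ℝ^d and all s in ℝ, we have ⟨x+y⟩^s ≤ (2/√3)^{|s|} ⟨x⟩^s ⟨y⟩^{|s|}, where ⟨x⟩ = (1+|x|²)^{1/2}. -/
/-!
The whole inequality rests on the identity
`4 (1 + a²) (1 + b²) - 3 (1 + (a + b)²) = (a - b)² + (2ab - 1)²`,
which gives `⟨x + y⟩ ≤ (2/√3) ⟨x⟩ ⟨y⟩` (with equality at `x = y`, `|x| = 1/√2`, so the constant is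
optimal). Raising it to the power `s ≥ 0` settles that case; for `s < 0` one applies the same bound
to `x = (x + y) + (-y)` and raises it to the power `-s`.
-/

open Real

theorem three_mul_one_add_add_sq_le (a b : ℝ) :
    3 * (1 + (a + b) ^ 2) ≤ 4 * ((1 + a ^ 2) * (1 + b ^ 2)) := by
  nlinarith [sq_nonneg (a - b), sq_nonneg (2 * a * b - 1)]

theorem sqrt_one_add_norm_add_sq_le {E : Type*} [SeminormedAddCommGroup E] (x y : E) :
    √(1 + ‖x + y‖ ^ 2) ≤ 2 / √3 * (√(1 + ‖x‖ ^ 2) * √(1 + ‖y‖ ^ 2)) := by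
  rw [sqrt_le_iff]
  refine ⟨by positivity, ?_⟩
  have hsq : ‖x + y‖ ^ 2 ≤ (‖x‖ + ‖y‖) ^ 2 :=
    pow_le_pow_left₀ (norm_nonneg _) (norm_add_le x y) 2
  have hbound := three_mul_one_add_add_sq_le ‖x‖ ‖y‖
  rw [mul_pow, mul_pow, div_pow, sq_sqrt (by norm_num), sq_sqrt (by positivity),
    sq_sqrt (by positivity)]
  linarith

theorem rpow_le_rpow_abs_mul_of_le_mul_mul {X U V C : ℝ} (hX : 0 < X) (hU : 0 < U) (hV : 0 < V)
    (hC : 0 < C) (hXU : X ≤ C * (U * V)) (hUX : U ≤ C * (X * V)) (s : ℝ) :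
    X ^ s ≤ C ^ |s| * (U ^ s * V ^ |s|) := by
  rcases le_or_gt 0 s with hs | hs
  · rw [abs_of_nonneg hs]
    calc X ^ s ≤ (C * (U * V)) ^ s := rpow_le_rpow hX.le hXU hs
      _ = C ^ s * (U ^ s * V ^ s) := by rw [mul_rpow hC.le (by positivity), mul_rpow hU.le hV.le]
  · rw [abs_of_neg hs]
    have hlower : U / (C * V) ≤ X := by
      rw [div_le_iff₀ (by positivity)]
      linarith
    calc X ^ s ≤ (U / (C * V)) ^ s := rpow_le_rpow_of_nonpos (by positivity) hlower hs.le
      _ = C ^ (-s) * (U ^ s * V ^ (-s)) := by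
        rw [div_rpow hU.le (by positivity), mul_rpow hC.le hV.le, rpow_neg hC.le, rpow_neg hV.le]
        field_simp

/-- Peetre's inequality with optimal constant:
`⟨x+y⟩^s ≤ (2/√3)^{|s|} ⟨x⟩^s ⟨y⟩^{|s|}` where `⟨x⟩ = (1+|x|²)^{1/2}`. -/
theorem peetre_inequality (d : ℕ) (x y : EuclideanSpace ℝ (Fin d)) (s : ℝ) :
    Real.sqrt (1 + ‖x + y‖ ^ 2) ^ s ≤
      (2 / Real.sqrt 3) ^ |s| * (Real.sqrt (1 + ‖x‖ ^ 2) ^ s * Real.sqrt (1 + ‖y‖ ^ 2) ^ |s|) := by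
  have hsum := sqrt_one_add_norm_add_sq_le x y
  have hdiff := sqrt_one_add_norm_add_sq_le (x + y) (-y)
  rw [add_neg_cancel_right, norm_neg] at hdiff
  exact rpow_le_rpow_abs_mul_of_le_mul_mul (by positivity) (by positivity) (by positivity)
    (by positivity) hsum hdiff s
end

section
/- Let s > 0, u ∈ S'(ℝ^m) and v ∈ S'(ℝ^n). Then WF_g^s(u ⊗ v) ⊆ {(x,ξ) ∈ T*ℝ^{m+n} \ {0} : (x',ξ') ∈ WF_g^s(u) ∪ {0} and (x'',ξ'') ∈ WF_g^s(v) ∪ {0}}, where x = (x',x'') with x' ∈ ℝ^m, x'' ∈ ℝ^n, and similarly for ξ. -/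
/-!
`H = V_{φ⊗ψ}(u ⊗ v)` factors as `F(x', ξ') · G(x'', ξ'')`. If `(x'₀, ξ'₀) ≠ 0` lies
outside `WF_g^s(u)`, then `F` decays rapidly along the curves `λ ↦ (λx', λ^s ξ')` uniformly near
it, while the polynomial bound of `G` grows at most like a fixed power of `max 1 λ` along the
curves `λ ↦ (λx'', λ^s ξ'')`, uniformly for bounded `(x'', ξ'')`. Trading that power against the
decay of `F` shows that `H` decays rapidly near `z₀`, i.e. `z₀ ∉ WF_g^s(u ⊗ v)`. The second
factor is symmetric.
-/

/-- The anisotropic s-Gabor wave front set of a tempered distribution, expressed through its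
short-time Fourier transform `F = V_φ u : ℝ^d × ℝ^d → ℂ`: a nonzero point `z₀` is outside
the wave front set iff `V_φ u` decays superpolynomially along the s-curves
`λ ↦ (λx, λ^s ξ)` uniformly near `z₀`. -/
def WFgs (s : ℝ) {E : Type*} [NormedAddCommGroup E] [NormedSpace ℝ E]
    (F : E × E → ℂ) : Set (E × E) :=
  {z | z ≠ 0 ∧ ¬ ∃ ε : ℝ, 0 < ε ∧ ∀ N : ℕ, ∃ C : ℝ,
    ∀ w : E × E, dist w z < ε → ∀ l : ℝ, 0 < l →
      l ^ N * ‖F (l • w.1, l ^ s • w.2)‖ ≤ C}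

open Filter Topology

section PolynomiallyBounded

variable {X X' Y : Type*} [Norm Y]

def PolynomiallyBounded [Norm X] (g : X → Y) : Prop :=
  ∃ (k : ℕ) (C : ℝ), ∀ x, ‖g x‖ ≤ C * (1 + ‖x‖) ^ k

theorem PolynomiallyBounded.exists_nonneg [SeminormedAddGroup X] {g : X → Y}
    (hg : PolynomiallyBounded g) :
    ∃ (k : ℕ) (C : ℝ), 0 ≤ C ∧ ∀ x, ‖g x‖ ≤ C * (1 + ‖x‖) ^ k := by
  obtain ⟨k, C, hC⟩ := hg
  refine ⟨k, max C 0, le_max_right _ _, fun x => (hC x).trans ?_⟩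
  gcongr
  exact le_max_left _ _

theorem PolynomiallyBounded.comp [Norm X] [SeminormedAddGroup X'] {g : X' → Y}
    (hg : PolynomiallyBounded g) {π : X → X'} (hπ : ∀ x, ‖π x‖ ≤ ‖x‖) :
    PolynomiallyBounded (g ∘ π) := by
  obtain ⟨k, C, hC0, hC⟩ := hg.exists_nonneg
  refine ⟨k, C, fun x => (hC (π x)).trans ?_⟩
  gcongr
  exact hπ x

end PolynomiallyBounded

section Decay

variable {E E' : Type*} [NormedAddCommGroup E] [NormedSpace ℝ E]
  [NormedAddCommGroup E'] [NormedSpace ℝ E']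

def DecaysRapidlyNear (s : ℝ) (F : E × E → ℂ) (z : E × E) : Prop :=
  ∃ U ∈ 𝓝 z, ∀ N : ℕ, ∃ C : ℝ, ∀ w ∈ U, ∀ l : ℝ, 0 < l →
    l ^ N * ‖F (l • w.1, l ^ s • w.2)‖ ≤ C

theorem mem_WFgs_iff {s : ℝ} {F : E × E → ℂ} {z : E × E} :
    z ∈ WFgs s F ↔ z ≠ 0 ∧ ¬ DecaysRapidlyNear s F z := by
  refine and_congr_right' (not_congr ⟨?_, ?_⟩)
  · rintro ⟨ε, hε, h⟩
    exact ⟨Metric.ball z ε, Metric.ball_mem_nhds z hε,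
      fun N => (h N).imp fun C hC w hw => hC w hw⟩
  · rintro ⟨U, hU, h⟩
    obtain ⟨ε, hε, hball⟩ := Metric.mem_nhds_iff.1 hU
    exact ⟨ε, hε, fun N => (h N).imp fun C hC w hw => hC w (hball hw)⟩

theorem norm_dilation_le {s l : ℝ} (hs : 0 ≤ s) (hl : 0 < l) (w : E × E) :
    ‖(l • w.1, l ^ s • w.2)‖ ≤ max 1 l ^ (⌈s⌉₊ + 1) * ‖w‖ := by
  set t := max 1 l
  have ht : 1 ≤ t := le_max_left _ _
  have hl_le : l ≤ t ^ (⌈s⌉₊ + 1) := (le_max_right _ _).trans (le_self_pow₀ ht (by omega))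
  have hls_le : l ^ s ≤ t ^ (⌈s⌉₊ + 1) :=
    calc l ^ s ≤ t ^ s := Real.rpow_le_rpow hl.le (le_max_right _ _) hs
      _ ≤ t ^ (⌈s⌉₊ : ℝ) := Real.rpow_le_rpow_of_exponent_le ht (Nat.le_ceil s)
      _ = t ^ ⌈s⌉₊ := Real.rpow_natCast t _
      _ ≤ t ^ (⌈s⌉₊ + 1) := pow_le_pow_right₀ ht (Nat.le_succ _)
  rw [Prod.norm_def, Prod.norm_def, norm_smul, norm_smul, Real.norm_of_nonneg hl.le,
    Real.norm_of_nonneg (Real.rpow_nonneg hl.le s), mul_max_of_nonneg _ _ (by positivity)]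
  exact max_le_max (by gcongr) (by gcongr)

theorem PolynomiallyBounded.norm_apply_dilation_le {g : E × E → ℂ} (hg : PolynomiallyBounded g)
    {s : ℝ} (hs : 0 ≤ s) (R : ℝ) :
    ∃ (K : ℝ) (M : ℕ), ∀ w : E × E, ‖w‖ ≤ R → ∀ l : ℝ, 0 < l →
      ‖g (l • w.1, l ^ s • w.2)‖ ≤ K * max 1 l ^ M := by
  obtain ⟨k, C, hC0, hC⟩ := hg.exists_nonneg
  refine ⟨C * (1 + R) ^ k, (⌈s⌉₊ + 1) * k, fun w hw l hl => (hC _).trans ?_⟩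
  have ht : 1 ≤ max 1 l ^ (⌈s⌉₊ + 1) := one_le_pow₀ (le_max_left _ _)
  have hgrowth : 1 + ‖(l • w.1, l ^ s • w.2)‖ ≤ max 1 l ^ (⌈s⌉₊ + 1) * (1 + R) := by
    have hdil := norm_dilation_le hs hl w
    have hwR : max 1 l ^ (⌈s⌉₊ + 1) * ‖w‖ ≤ max 1 l ^ (⌈s⌉₊ + 1) * R := by gcongr
    linarith
  calc C * (1 + ‖(l • w.1, l ^ s • w.2)‖) ^ k
      ≤ C * (max 1 l ^ (⌈s⌉₊ + 1) * (1 + R)) ^ k := by gcongr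
    _ = C * (1 + R) ^ k * max 1 l ^ ((⌈s⌉₊ + 1) * k) := by rw [mul_pow, ← pow_mul]; ring

/-- A factor growing like `max 1 l ^ M` is absorbed by the decay estimates of orders `N`
(for `l ≤ 1`) and `N + M` (for `l > 1`). -/
theorem pow_mul_mul_le {l a b C₁ C₂ K : ℝ} {N M : ℕ} (hl : 0 < l) (ha : 0 ≤ a) (hb : 0 ≤ b)
    (h₁ : l ^ N * a ≤ C₁) (h₂ : l ^ (N + M) * a ≤ C₂) (hbK : b ≤ K * max 1 l ^ M) :
    l ^ N * (a * b) ≤ max C₁ C₂ * K := by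
  have hK : 0 ≤ K := nonneg_of_mul_nonneg_left (hb.trans hbK) (by positivity)
  rcases le_or_gt l 1 with hl1 | hl1
  · rw [max_eq_left hl1, one_pow, mul_one] at hbK
    calc l ^ N * (a * b) = l ^ N * a * b := by ring
      _ ≤ C₁ * K := mul_le_mul h₁ hbK hb (h₁.trans' (by positivity))
      _ ≤ max C₁ C₂ * K := by gcongr; exact le_max_left _ _
  · rw [max_eq_right hl1.le] at hbK
    calc l ^ N * (a * b) ≤ l ^ N * (a * (K * l ^ M)) := by gcongr
      _ = l ^ (N + M) * a * K := by ring
      _ ≤ C₂ * K := by gcongr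
      _ ≤ max C₁ C₂ * K := by gcongr; exact le_max_right _ _

theorem DecaysRapidlyNear.mul_polynomiallyBounded {s : ℝ} (hs : 0 ≤ s) {f g : E × E → ℂ}
    {z : E × E} (hf : DecaysRapidlyNear s f z) (hg : PolynomiallyBounded g) :
    DecaysRapidlyNear s (f * g) z := by
  obtain ⟨U, hU, hdecay⟩ := hf
  obtain ⟨K, M, hK⟩ := hg.norm_apply_dilation_le hs (‖z‖ + 1)
  refine ⟨U ∩ Metric.ball z 1, inter_mem hU (Metric.ball_mem_nhds z one_pos), fun N => ?_⟩
  obtain ⟨C₁, h₁⟩ := hdecay N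
  obtain ⟨C₂, h₂⟩ := hdecay (N + M)
  refine ⟨max C₁ C₂ * K, fun w ⟨hwU, hwz⟩ l hl => ?_⟩
  have hwR : ‖w‖ ≤ ‖z‖ + 1 := norm_le_of_mem_closedBall (Metric.ball_subset_closedBall hwz)
  rw [Pi.mul_apply, norm_mul]
  exact pow_mul_mul_le hl (norm_nonneg _) (norm_nonneg _) (h₁ w hwU l hl) (h₂ w hwU l hl)
    (hK w hwR l hl)

theorem DecaysRapidlyNear.comp_prodMap {s : ℝ} {F : E' × E' → ℂ} {z : E × E}
    (A : E →L[ℝ] E') (hF : DecaysRapidlyNear s F (Prod.map A A z)) :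
    DecaysRapidlyNear s (F ∘ Prod.map A A) z := by
  obtain ⟨U, hU, hdecay⟩ := hF
  refine ⟨Prod.map A A ⁻¹' U,
    (A.continuous.prodMap A.continuous).continuousAt.preimage_mem_nhds hU, fun N => ?_⟩
  obtain ⟨C, hC⟩ := hdecay N
  refine ⟨C, fun w hw l hl => ?_⟩
  simpa only [Function.comp_apply, Prod.map, map_smul] using hC _ hw l hl

theorem prodMap_mem_WFgs_union_zero {s : ℝ} (hs : 0 ≤ s) (A : E →L[ℝ] E') (F : E' × E' → ℂ)
    {g : E × E → ℂ} (hg : PolynomiallyBounded g) {z : E × E}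
    (hz : z ∈ WFgs s ((F ∘ Prod.map A A) * g)) :
    Prod.map A A z ∈ WFgs s F ∪ {0} := by
  by_cases h0 : Prod.map A A z = 0
  · exact Or.inr h0
  · refine Or.inl (mem_WFgs_iff.2 ⟨h0, fun hF => (mem_WFgs_iff.1 hz).2 ?_⟩)
    exact (hF.comp_prodMap A).mul_polynomiallyBounded hs hg

end Decay

/-- Here `F = V_φ u`, `G = V_ψ v` and `H = V_{φ⊗ψ}(u ⊗ v)`. -/
theorem tensor_wavefront_inclusion (m n : ℕ) (s : ℝ) (hs : 0 < s)
    (F : EuclideanSpace ℝ (Fin m) × EuclideanSpace ℝ (Fin m) → ℂ)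
    (G : EuclideanSpace ℝ (Fin n) × EuclideanSpace ℝ (Fin n) → ℂ)
    (hF : ∃ (k : ℕ) (C : ℝ), ∀ z, ‖F z‖ ≤ C * (1 + ‖z‖) ^ k)
    (hG : ∃ (k : ℕ) (C : ℝ), ∀ z, ‖G z‖ ≤ C * (1 + ‖z‖) ^ k)
    (H : (EuclideanSpace ℝ (Fin m) × EuclideanSpace ℝ (Fin n)) ×
         (EuclideanSpace ℝ (Fin m) × EuclideanSpace ℝ (Fin n)) → ℂ)
    (hH : ∀ x' x'' ξ' ξ'', H ((x', x''), (ξ', ξ'')) = F (x', ξ') * G (x'', ξ'')) :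
    WFgs s H ⊆
      {z | z ≠ 0 ∧ (z.1.1, z.2.1) ∈ WFgs s F ∪ {0} ∧ (z.1.2, z.2.2) ∈ WFgs s G ∪ {0}} := by
  set π₁ := ContinuousLinearMap.fst ℝ (EuclideanSpace ℝ (Fin m)) (EuclideanSpace ℝ (Fin n))
  set π₂ := ContinuousLinearMap.snd ℝ (EuclideanSpace ℝ (Fin m)) (EuclideanSpace ℝ (Fin n))
  have hH_eq : H = (F ∘ Prod.map π₁ π₁) * (G ∘ Prod.map π₂ π₂) :=
    funext fun w => hH w.1.1 w.1.2 w.2.1 w.2.2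
  have hF' : PolynomiallyBounded (F ∘ Prod.map π₁ π₁) :=
    PolynomiallyBounded.comp hF fun w => max_le_max (norm_fst_le w.1) (norm_fst_le w.2)
  have hG' : PolynomiallyBounded (G ∘ Prod.map π₂ π₂) :=
    PolynomiallyBounded.comp hG fun w => max_le_max (norm_snd_le w.1) (norm_snd_le w.2)
  intro z hz
  rw [hH_eq] at hz
  refine ⟨hz.1, prodMap_mem_WFgs_union_zero hs.le π₁ F hG' hz, ?_⟩
  rw [mul_comm] at hz
  exact prodMap_mem_WFgs_union_zero hs.le π₂ G hF' hz
end

section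
/- Let s > 0 and K ∈ S'(ℝ^{2d}). Suppose WF_{g,1}^s(K) = ∅ and WF_{g,2}^s(K) = ∅, where WF_{g,1}^s(K) = {(x,ξ) : (x,0,ξ,0) ∈ WF_g^s(K)} and WF_{g,2}^s(K) = {(y,η) : (0,y,0,−η) ∈ WF_g^s(K)}. Then there exists c > 1 such that WF_g^s(K) ⊆ {(x,y,ξ,η) ∈ T*ℝ^{2d} : c^{-1}(|x| + |ξ|^{1/s}) < |y| + |η|^{1/s} < c(|x| + |ξ|^{1/s})}. -/
/-!
Both gauges `f = |x| + |ξ|^{1/s}` and `g = |y| + |η|^{1/s}` are homogeneous of degree one under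
the `s`-conic dilations, so the ratio `g / f` is constant along the dilation orbits in `W`. Every
such orbit meets the compact slice `{|(x,y)| + |(ξ,η)|^{1/s} = 1}` of `W` (closedness of `W`
away from the origin), and the two excluded families of points say exactly that `f` and `g` do not
vanish on `W`. A continuous positive ratio on a compact set is bounded above and below.
-/

open Filter

section Compact

variable {X : Type*} [TopologicalSpace X] {K : Set X} {f g : X → ℝ}

theorem IsCompact.eventually_lt_mul (hK : IsCompact K) (hf : ContinuousOn f K)
    (hg : ContinuousOn g K) (hf_pos : ∀ z ∈ K, 0 < f z) :
    ∀ᶠ c in atTop, ∀ z ∈ K, g z < c * f z := by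
  obtain ⟨C, hC⟩ := hK.exists_bound_of_continuousOn (hg.div hf fun z hz => (hf_pos z hz).ne')
  filter_upwards [eventually_gt_atTop C] with c hc z hz
  have hle : g z / f z ≤ C := (le_abs_self _).trans (hC z hz)
  calc g z ≤ C * f z := (div_le_iff₀ (hf_pos z hz)).1 hle
    _ < c * f z := mul_lt_mul_of_pos_right hc (hf_pos z hz)

theorem IsCompact.exists_ratio_bounds (hK : IsCompact K) (hf : ContinuousOn f K)
    (hg : ContinuousOn g K) (hf_pos : ∀ z ∈ K, 0 < f z) (hg_pos : ∀ z ∈ K, 0 < g z) :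
    ∃ c, 1 < c ∧ ∀ z ∈ K, c⁻¹ * f z < g z ∧ g z < c * f z := by
  obtain ⟨c, hgf, hfg, hc⟩ := ((hK.eventually_lt_mul hf hg hf_pos).and
    ((hK.eventually_lt_mul hg hf hg_pos).and (eventually_gt_atTop 1))).exists
  exact ⟨c, hc, fun z hz => ⟨(inv_mul_lt_iff₀ (by linarith)).2 (hfg z hz), hgf z hz⟩⟩

end Compact

section AnisoGauge

variable {E F : Type*} [NormedAddCommGroup E] [NormedAddCommGroup F] {s : ℝ}

noncomputable def anisoGauge (s : ℝ) (x : E) (ξ : F) : ℝ := ‖x‖ + ‖ξ‖ ^ (1 / s)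

theorem anisoGauge_nonneg (s : ℝ) (x : E) (ξ : F) : 0 ≤ anisoGauge s x ξ :=
  add_nonneg (norm_nonneg x) (Real.rpow_nonneg (norm_nonneg ξ) _)

theorem anisoGauge_eq_zero_iff (hs : s ≠ 0) {x : E} {ξ : F} :
    anisoGauge s x ξ = 0 ↔ x = 0 ∧ ξ = 0 := by
  rw [anisoGauge, add_eq_zero_iff_of_nonneg (norm_nonneg x) (Real.rpow_nonneg (norm_nonneg ξ) _),
    Real.rpow_eq_zero_iff_of_nonneg (norm_nonneg ξ), norm_eq_zero, norm_eq_zero]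
  simp [hs]

theorem anisoGauge_smul [NormedSpace ℝ E] [NormedSpace ℝ F] (hs : s ≠ 0) {l : ℝ}
    (hl : 0 < l) (x : E) (ξ : F) :
    anisoGauge s (l • x) (l ^ s • ξ) = l * anisoGauge s x ξ := by
  rw [anisoGauge, anisoGauge, norm_smul, norm_smul, Real.norm_of_nonneg hl.le,
    Real.norm_of_nonneg (Real.rpow_nonneg hl.le s),
    Real.mul_rpow (Real.rpow_nonneg hl.le s) (norm_nonneg ξ), ← Real.rpow_mul hl.le,
    mul_one_div_cancel hs, Real.rpow_one, mul_add]

theorem anisoGauge_pos (hs : s ≠ 0) {p : E × F} (hp : p ≠ 0) : 0 < anisoGauge s p.1 p.2 :=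
  (anisoGauge_nonneg s p.1 p.2).lt_of_ne' fun h =>
    hp (Prod.ext_iff.2 ((anisoGauge_eq_zero_iff hs).1 h))

theorem anisoGauge_inv_smul_self [NormedSpace ℝ E] [NormedSpace ℝ F] (hs : s ≠ 0)
    {x : E} {ξ : F} (h : 0 < anisoGauge s x ξ) :
    anisoGauge s ((anisoGauge s x ξ)⁻¹ • x) ((anisoGauge s x ξ)⁻¹ ^ s • ξ) = 1 := by
  rw [anisoGauge_smul hs (inv_pos.2 h), inv_mul_cancel₀ h.ne']

theorem continuous_anisoGauge (hs : 0 < s) : Continuous fun p : E × F => anisoGauge s p.1 p.2 :=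
  continuous_fst.norm.add ((Real.continuous_rpow_const (by positivity)).comp continuous_snd.norm)

theorem norm_le_one_of_anisoGauge_le_one (hs : 0 < s) {x : E} {ξ : F}
    (h : anisoGauge s x ξ ≤ 1) : ‖(x, ξ)‖ ≤ 1 := by
  rw [anisoGauge] at h
  have hρ : 0 ≤ ‖ξ‖ ^ (1 / s) := Real.rpow_nonneg (norm_nonneg ξ) _
  have hξ : ‖ξ‖ ≤ 1 := by
    by_contra! hξ
    linarith [norm_nonneg x, Real.one_lt_rpow hξ (one_div_pos.2 hs)]
  exact max_le (by linarith) hξ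

theorem isCompact_anisoGauge_eq_one [ProperSpace E] [ProperSpace F] (hs : 0 < s) :
    IsCompact {p : E × F | anisoGauge s p.1 p.2 = 1} :=
  Metric.isCompact_of_isClosed_isBounded (isClosed_eq (continuous_anisoGauge hs) continuous_const)
    ((Metric.isBounded_closedBall (x := (0 : E × F)) (r := 1)).subset fun _ hp =>
      mem_closedBall_zero_iff.2 (norm_le_one_of_anisoGauge_le_one hs hp.le))

theorem exists_ratio_bounds_of_isConic [NormedSpace ℝ E] [NormedSpace ℝ F] [ProperSpace E]
    [ProperSpace F] (hs : 0 < s) {W : Set (E × F)} (hW0 : 0 ∉ W)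
    (hWclosed : ∀ p, p ≠ 0 → p ∈ closure W → p ∈ W)
    (hWconic : ∀ p ∈ W, ∀ l : ℝ, 0 < l → (l • p.1, l ^ s • p.2) ∈ W)
    {f g : E × F → ℝ} (hf : Continuous f) (hg : Continuous g)
    (hf_hom : ∀ l : ℝ, 0 < l → ∀ p, f (l • p.1, l ^ s • p.2) = l * f p)
    (hg_hom : ∀ l : ℝ, 0 < l → ∀ p, g (l • p.1, l ^ s • p.2) = l * g p)
    (hf_pos : ∀ p ∈ W, 0 < f p) (hg_pos : ∀ p ∈ W, 0 < g p) :
    ∃ c, 1 < c ∧ ∀ p ∈ W, c⁻¹ * f p < g p ∧ g p < c * f p := by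
  set K := closure W ∩ {p : E × F | anisoGauge s p.1 p.2 = 1}
  have hKW : K ⊆ W := fun p hp =>
    hWclosed p (by rintro rfl; simpa [anisoGauge, hs.ne'] using hp.2) hp.1
  have hK : IsCompact K := (isCompact_anisoGauge_eq_one hs).inter_left isClosed_closure
  obtain ⟨c, hc, hcK⟩ := hK.exists_ratio_bounds hf.continuousOn hg.continuousOn
    (fun p hp => hf_pos p (hKW hp)) (fun p hp => hg_pos p (hKW hp))
  refine ⟨c, hc, fun p hp => ?_⟩
  have hρ := anisoGauge_pos hs.ne' (ne_of_mem_of_not_mem hp hW0)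
  have hl := inv_pos.2 hρ
  have hpK : ((anisoGauge s p.1 p.2)⁻¹ • p.1, (anisoGauge s p.1 p.2)⁻¹ ^ s • p.2) ∈ K :=
    ⟨subset_closure (hWconic p hp _ hl), anisoGauge_inv_smul_self hs.ne' hρ⟩
  have := hcK _ hpK
  rwa [hf_hom _ hl, hg_hom _ hl, mul_left_comm c⁻¹, mul_left_comm c, mul_lt_mul_iff_right₀ hl,
    mul_lt_mul_iff_right₀ hl] at this

end AnisoGauge
/-- Lemma 4.1: if `W = WF_g^s(K) ⊆ T*ℝ^{2d} \ {0}` (a closed s-conic set, here points are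
written `((x,y),(ξ,η))`) contains no points of the form `(x,0,ξ,0)` nor `(0,y,0,−η)`, then
there exists `c > 1` with
`W ⊆ {(x,y,ξ,η) : c⁻¹(|x|+|ξ|^{1/s}) < |y|+|η|^{1/s} < c(|x|+|ξ|^{1/s})}`. -/
theorem kernel_wavefront_graph_bound (d : ℕ) (s : ℝ) (hs : 0 < s)
    (W : Set ((EuclideanSpace ℝ (Fin d) × EuclideanSpace ℝ (Fin d)) ×
              (EuclideanSpace ℝ (Fin d) × EuclideanSpace ℝ (Fin d))))
    (hW0 : ∀ z ∈ W, z ≠ 0)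
    (hWclosed : ∀ z, z ≠ 0 → z ∈ closure W → z ∈ W)
    (hWconic : ∀ x y ξ η, ((x, y), (ξ, η)) ∈ W → ∀ l : ℝ, 0 < l →
      ((l • x, l • y), (l ^ s • ξ, l ^ s • η)) ∈ W)
    (h1 : ∀ x ξ : EuclideanSpace ℝ (Fin d), ((x, (0 : EuclideanSpace ℝ (Fin d))),
      (ξ, (0 : EuclideanSpace ℝ (Fin d)))) ∉ W)
    (h2 : ∀ y η : EuclideanSpace ℝ (Fin d), (((0 : EuclideanSpace ℝ (Fin d)), y),
      ((0 : EuclideanSpace ℝ (Fin d)), -η)) ∉ W) :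
    ∃ c : ℝ, 1 < c ∧ ∀ x y ξ η, ((x, y), (ξ, η)) ∈ W →
      c⁻¹ * (‖x‖ + ‖ξ‖ ^ (1 / s)) < ‖y‖ + ‖η‖ ^ (1 / s) ∧
      ‖y‖ + ‖η‖ ^ (1 / s) < c * (‖x‖ + ‖ξ‖ ^ (1 / s)) := by
  have hf_pos : ∀ z ∈ W, 0 < anisoGauge s z.1.1 z.2.1 := by
    rintro ⟨⟨x, y⟩, ξ, η⟩ hz
    refine (anisoGauge_nonneg s x ξ).lt_of_ne' fun h => h2 y (-η) ?_
    obtain ⟨rfl, rfl⟩ := (anisoGauge_eq_zero_iff hs.ne').1 h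
    simpa using hz
  have hg_pos : ∀ z ∈ W, 0 < anisoGauge s z.1.2 z.2.2 := by
    rintro ⟨⟨x, y⟩, ξ, η⟩ hz
    refine (anisoGauge_nonneg s y η).lt_of_ne' fun h => h1 x ξ ?_
    obtain ⟨rfl, rfl⟩ := (anisoGauge_eq_zero_iff hs.ne').1 h
    exact hz
  obtain ⟨c, hc, hcW⟩ := exists_ratio_bounds_of_isConic (f := fun z => anisoGauge s z.1.1 z.2.1)
    (g := fun z => anisoGauge s z.1.2 z.2.2) hs (fun h => hW0 0 h rfl) hWclosed
    (fun ⟨⟨x, y⟩, ξ, η⟩ hz l hl => hWconic x y ξ η hz l hl)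
    ((continuous_anisoGauge hs).comp (continuous_fst.fst.prodMk continuous_snd.fst))
    ((continuous_anisoGauge hs).comp (continuous_fst.snd.prodMk continuous_snd.snd))
    (fun l hl z => anisoGauge_smul hs.ne' hl z.1.1 z.2.1)
    (fun l hl z => anisoGauge_smul hs.ne' hl z.1.2 z.2.2) hf_pos hg_pos
  exact ⟨c, hc, fun x y ξ η hz => hcW ((x, y), ξ, η) hz⟩
end

section
/- Let s > 0, K ∈ S'(ℝ^{2d}) with WF_{g,1}^s(K) = WF_{g,2}^s(K) = ∅, and u ∈ S'(ℝ^d). Then the set WF_g^s(K)' ∘ WF_g^s(u) := {(x,ξ) ∈ ℝ^{2d} : ∃(y,η) ∈ WF_g^s(u), (x,y,ξ,−η) ∈ WF_g^s(K)} is an s-conic subset of T*ℝ^d \ {0} that is closed in T*ℝ^d \ {0}. -/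
/-!
A limit `(x, ξ) ≠ 0` of points `(xₙ, ξₙ)` of `WK' ∘ Wu` comes with witnesses `(yₙ, ηₙ) ∈ Wu`.
Since `WK` has no point with `(x, ξ) = 0`, compactness of the unit `s`-sphere together with
`s`-conicity gives `|y| + |η|^{1/s} ≲ |x| + |ξ|^{1/s}` on `WK` (Lemma 4.1), so the witnesses are
bounded and a subsequence converges to some `(y, η)`. The limit `(x, y, ξ, -η)` lies in `WK`, so
`(y, η) ≠ 0` because `WK` has no point with `(y, η) = 0`, and hence `(y, η) ∈ Wu`.
-/

open Filter Topology

section AnisotropicNorm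

variable {E F : Type*} [NormedAddCommGroup E] [NormedAddCommGroup F] {s : ℝ}

/-- The paper's `|x| + |ξ|^{1/s}`, homogeneous of degree one under `(x, ξ) ↦ (λx, λ^s ξ)`. -/
noncomputable def sNorm (s : ℝ) (z : E × F) : ℝ := ‖z.1‖ + ‖z.2‖ ^ s⁻¹

lemma sNorm_nonneg (z : E × F) : 0 ≤ sNorm s z := by
  unfold sNorm
  positivity

@[simp]
lemma sNorm_neg_snd (x : E) (ξ : F) : sNorm s (x, -ξ) = sNorm s (x, ξ) := by
  simp [sNorm]

lemma sNorm_dilate [NormedSpace ℝ E] [NormedSpace ℝ F] (hs : s ≠ 0) {l : ℝ} (hl : 0 < l)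
    (x : E) (ξ : F) :
    sNorm s (l • x, l ^ s • ξ) = l * sNorm s (x, ξ) := by
  simp only [sNorm, norm_smul, Real.norm_of_nonneg hl.le,
    Real.norm_of_nonneg (Real.rpow_nonneg hl.le s)]
  rw [Real.mul_rpow (Real.rpow_nonneg hl.le s) (norm_nonneg _), Real.rpow_rpow_inv hl.le hs]
  ring

lemma sNorm_eq_zero (hs : s ≠ 0) {z : E × F} : sNorm s z = 0 ↔ z = 0 := by
  simp [sNorm, add_eq_zero_iff_of_nonneg, Real.rpow_nonneg, hs, Prod.ext_iff]

lemma continuous_sNorm (hs : 0 < s) : Continuous (sNorm s : E × F → ℝ) :=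
  continuous_fst.norm.add <|
    continuous_snd.norm.rpow_const fun _ => Or.inr (inv_nonneg.mpr hs.le)

lemma norm_le_of_sNorm_le (hs : 0 < s) {z : E × F} {R : ℝ} (h : sNorm s z ≤ R) :
    ‖z‖ ≤ max R (R ^ s) := by
  have h₁ : ‖z.1‖ ≤ R := le_of_add_le_of_nonneg_left h (by positivity)
  have h₂ : ‖z.2‖ ^ s⁻¹ ≤ R := le_of_add_le_of_nonneg_right h (norm_nonneg _)
  rw [Real.rpow_inv_le_iff_of_pos (norm_nonneg _) ((sNorm_nonneg z).trans h) hs] at h₂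
  exact max_le (h₁.trans (le_max_left _ _)) (h₂.trans (le_max_right _ _))

end AnisotropicNorm

section Composition

variable {E₁ E₂ F₁ F₂ : Type*} {s : ℝ} {WK : Set ((E₁ × E₂) × (F₁ × F₂))} {Wu : Set (E₂ × F₂)}

/-- `WK' ∘ Wu`, where `WK` has points `((x, y), (ξ, η))`. -/
def wfComp [Neg F₂] (WK : Set ((E₁ × E₂) × (F₁ × F₂))) (Wu : Set (E₂ × F₂)) : Set (E₁ × F₁) :=
  {w | ∃ y η, (y, η) ∈ Wu ∧ ((w.1, y), (w.2, -η)) ∈ WK}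

lemma ne_zero_of_mem_wfComp [Zero E₁] [Zero F₁] [Neg F₂] (h2 : ∀ y η, ((0, y), (0, η)) ∉ WK)
    {w : E₁ × F₁} (hw : w ∈ wfComp WK Wu) : w ≠ 0 := by
  rintro rfl
  obtain ⟨y, η, -, hK⟩ := hw
  exact h2 y (-η) hK

lemma dilate_mem_wfComp [SMul ℝ E₁] [SMul ℝ E₂] [SMul ℝ F₁]
    [AddGroup F₂] [DistribMulAction ℝ F₂]
    (hWKconic : ∀ x y ξ η, ((x, y), (ξ, η)) ∈ WK → ∀ l : ℝ, 0 < l →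
      ((l • x, l • y), (l ^ s • ξ, l ^ s • η)) ∈ WK)
    (hWuconic : ∀ z ∈ Wu, ∀ l : ℝ, 0 < l → (l • z.1, l ^ s • z.2) ∈ Wu)
    {w : E₁ × F₁} (hw : w ∈ wfComp WK Wu) {l : ℝ} (hl : 0 < l) :
    (l • w.1, l ^ s • w.2) ∈ wfComp WK Wu := by
  obtain ⟨y, η, hu, hK⟩ := hw
  refine ⟨l • y, l ^ s • η, hWuconic (y, η) hu l hl, ?_⟩
  simpa only [smul_neg] using hWKconic _ _ _ _ hK l hl

variable [NormedAddCommGroup E₁] [NormedSpace ℝ E₁] [ProperSpace E₁]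
  [NormedAddCommGroup E₂] [NormedSpace ℝ E₂] [ProperSpace E₂]
  [NormedAddCommGroup F₁] [NormedSpace ℝ F₁] [ProperSpace F₁]
  [NormedAddCommGroup F₂] [NormedSpace ℝ F₂] [ProperSpace F₂]

theorem exists_pos_mul_sNorm_le_sNorm (hs : 0 < s)
    (hWKclosed : ∀ z, z ≠ 0 → z ∈ closure WK → z ∈ WK)
    (hWKconic : ∀ x y ξ η, ((x, y), (ξ, η)) ∈ WK → ∀ l : ℝ, 0 < l →
      ((l • x, l • y), (l ^ s • ξ, l ^ s • η)) ∈ WK)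
    (h2 : ∀ y η, ((0, y), (0, η)) ∉ WK) :
    ∃ c > 0, ∀ x y ξ η, ((x, y), (ξ, η)) ∈ WK → c * sNorm s (y, η) ≤ sNorm s (x, ξ) := by
  -- `sNorm s (x, ξ)` has a positive minimum `m` on `K`, and dilating a point of `WK` by
  -- `1 / sNorm s (y, η)` lands it either in `K` or where `sNorm s (x, ξ) > 1`.
  set K := closure WK ∩ {p | sNorm s (p.1.2, p.2.2) = 1 ∧ sNorm s (p.1.1, p.2.1) ≤ 1}
  have hρ : Continuous fun p : (E₁ × E₂) × (F₁ × F₂) => sNorm s (p.1.1, p.2.1) :=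
    (continuous_sNorm hs).comp (by fun_prop)
  have hK : IsCompact K := by
    refine Metric.isCompact_of_isClosed_isBounded
      (isClosed_closure.inter ((isClosed_eq ((continuous_sNorm hs).comp (by fun_prop))
        continuous_const).inter (isClosed_le hρ continuous_const)))
      (isBounded_iff_forall_norm_le.mpr ⟨1, ?_⟩)
    rintro ⟨⟨x, y⟩, ⟨ξ, η⟩⟩ ⟨-, hout, hin⟩
    have hxξ := norm_le_of_sNorm_le hs hin
    have hyη := norm_le_of_sNorm_le hs hout.le
    simp only [Prod.norm_def, Real.one_rpow, max_self, max_le_iff] at hxξ hyη ⊢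
    exact ⟨⟨hxξ.1, hyη.1⟩, hxξ.2, hyη.2⟩
  have hpos : ∀ p ∈ K, 0 < sNorm s (p.1.1, p.2.1) := by
    rintro ⟨⟨x, y⟩, ⟨ξ, η⟩⟩ ⟨hcl, hout, -⟩
    have hp : ((x, y), (ξ, η)) ∈ WK := by
      refine hWKclosed _ (fun h => ?_) hcl
      simp only [Prod.mk_eq_zero] at h
      simp [h.1.2, h.2.2, sNorm, Real.zero_rpow (inv_ne_zero hs.ne')] at hout
    refine (sNorm_nonneg _).lt_of_ne' fun h => ?_
    obtain ⟨rfl, rfl⟩ := Prod.mk_eq_zero.mp ((sNorm_eq_zero hs.ne').mp h)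
    exact h2 y η hp
  obtain ⟨m, hm, hmK⟩ := hK.exists_forall_le' hρ.continuousOn hpos
  refine ⟨min m 1, lt_min hm one_pos, fun x y ξ η hp => ?_⟩
  rcases (sNorm_nonneg (s := s) (y, η)).eq_or_lt with hr | hr
  · rw [← hr, mul_zero]
    exact sNorm_nonneg _
  set r := sNorm s (y, η)
  have hdil := hWKconic x y ξ η hp r⁻¹ (inv_pos.mpr hr)
  have hin := sNorm_dilate hs.ne' (inv_pos.mpr hr) x ξ
  have hout : sNorm s (r⁻¹ • y, r⁻¹ ^ s • η) = 1 := by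
    rw [sNorm_dilate hs.ne' (inv_pos.mpr hr), inv_mul_cancel₀ hr.ne']
  have hc : min m 1 ≤ r⁻¹ * sNorm s (x, ξ) := by
    by_cases h1 : r⁻¹ * sNorm s (x, ξ) ≤ 1
    · exact (min_le_left _ _).trans (hin ▸ hmK _ ⟨subset_closure hdil, hout, hin ▸ h1⟩)
    · exact (min_le_right _ _).trans (not_le.mp h1).le
  rwa [le_inv_mul_iff₀ hr, mul_comm] at hc

theorem mem_wfComp_of_mem_closure (hs : 0 < s)
    (hWKclosed : ∀ z, z ≠ 0 → z ∈ closure WK → z ∈ WK)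
    (hWKconic : ∀ x y ξ η, ((x, y), (ξ, η)) ∈ WK → ∀ l : ℝ, 0 < l →
      ((l • x, l • y), (l ^ s • ξ, l ^ s • η)) ∈ WK)
    (h1 : ∀ x ξ, ((x, 0), (ξ, 0)) ∉ WK) (h2 : ∀ y η, ((0, y), (0, η)) ∉ WK)
    (hWuclosed : ∀ z, z ≠ 0 → z ∈ closure Wu → z ∈ Wu)
    {z : E₁ × F₁} (hz : z ≠ 0) (hzcl : z ∈ closure (wfComp WK Wu)) : z ∈ wfComp WK Wu := by
  obtain ⟨c, hc, hWKbound⟩ := exists_pos_mul_sNorm_le_sNorm hs hWKclosed hWKconic h2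
  obtain ⟨u, hu, hlim⟩ := mem_closure_iff_seq_limit.mp hzcl
  choose y η hWu hWK using hu
  obtain ⟨R, hR⟩ := ((continuous_sNorm hs).tendsto z |>.comp hlim).bddAbove_range
  have hw : ∀ n, (y n, η n) ∈ Metric.closedBall 0 (max (R / c) ((R / c) ^ s)) := fun n => by
    refine mem_closedBall_zero_iff.mpr (norm_le_of_sNorm_le hs ?_)
    rw [le_div_iff₀' hc, ← sNorm_neg_snd]
    exact (hWKbound _ _ _ _ (hWK n)).trans (hR ⟨n, rfl⟩)
  obtain ⟨a, -, φ, hφ, ha⟩ := (isCompact_closedBall _ _).tendsto_subseq hw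
  have hzφ := hlim.comp hφ.tendsto_atTop
  have hlimK : ((z.1, a.1), (z.2, -a.2)) ∈ closure WK :=
    mem_closure_of_tendsto ((hzφ.fst_nhds.prodMk_nhds ha.fst_nhds).prodMk_nhds
      (hzφ.snd_nhds.prodMk_nhds ha.snd_nhds.neg)) (Eventually.of_forall fun n => hWK (φ n))
  have hK : ((z.1, a.1), (z.2, -a.2)) ∈ WK :=
    hWKclosed _ (fun h => hz (Prod.ext (congrArg (·.1.1) h) (congrArg (·.2.1) h))) hlimK
  have ha0 : a ≠ 0 := by
    rintro rfl
    exact h1 z.1 z.2 (by simpa using hK)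
  exact ⟨a.1, a.2, hWuclosed a ha0 (mem_closure_of_tendsto ha
    (Eventually.of_forall fun n => hWu (φ n))), hK⟩

end Composition

theorem relation_composition_closed_sconic_general (d : ℕ) (s : ℝ) (hs : 0 < s)
    (WK : Set ((EuclideanSpace ℝ (Fin d) × EuclideanSpace ℝ (Fin d)) ×
               (EuclideanSpace ℝ (Fin d) × EuclideanSpace ℝ (Fin d))))
    (hWKclosed : ∀ z, z ≠ 0 → z ∈ closure WK → z ∈ WK)
    (hWKconic : ∀ x y ξ η, ((x, y), (ξ, η)) ∈ WK → ∀ l : ℝ, 0 < l →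
      ((l • x, l • y), (l ^ s • ξ, l ^ s • η)) ∈ WK)
    (h1 : ∀ x ξ : EuclideanSpace ℝ (Fin d), ((x, (0 : EuclideanSpace ℝ (Fin d))),
      (ξ, (0 : EuclideanSpace ℝ (Fin d)))) ∉ WK)
    (h2 : ∀ y η : EuclideanSpace ℝ (Fin d), (((0 : EuclideanSpace ℝ (Fin d)), y),
      ((0 : EuclideanSpace ℝ (Fin d)), -η)) ∉ WK)
    (Wu : Set (EuclideanSpace ℝ (Fin d) × EuclideanSpace ℝ (Fin d)))
    (hWuclosed : ∀ z, z ≠ 0 → z ∈ closure Wu → z ∈ Wu)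
    (hWuconic : ∀ z ∈ Wu, ∀ l : ℝ, 0 < l → ((l • z.1, l ^ s • z.2) : _) ∈ Wu) :
    (∀ z ∈ {w : EuclideanSpace ℝ (Fin d) × EuclideanSpace ℝ (Fin d) |
        ∃ y η, (y, η) ∈ Wu ∧ ((w.1, y), (w.2, -η)) ∈ WK}, z ≠ 0) ∧
    (∀ z ∈ {w : EuclideanSpace ℝ (Fin d) × EuclideanSpace ℝ (Fin d) |
        ∃ y η, (y, η) ∈ Wu ∧ ((w.1, y), (w.2, -η)) ∈ WK}, ∀ l : ℝ, 0 < l →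
        ((l • z.1, l ^ s • z.2) : _) ∈ {w : EuclideanSpace ℝ (Fin d) × EuclideanSpace ℝ (Fin d) |
          ∃ y η, (y, η) ∈ Wu ∧ ((w.1, y), (w.2, -η)) ∈ WK}) ∧
    (∀ z, z ≠ 0 →
      z ∈ closure {w : EuclideanSpace ℝ (Fin d) × EuclideanSpace ℝ (Fin d) |
        ∃ y η, (y, η) ∈ Wu ∧ ((w.1, y), (w.2, -η)) ∈ WK} →
      z ∈ {w : EuclideanSpace ℝ (Fin d) × EuclideanSpace ℝ (Fin d) |
        ∃ y η, (y, η) ∈ Wu ∧ ((w.1, y), (w.2, -η)) ∈ WK}) := by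
  have h2' : ∀ y η, ((0, y), (0, η)) ∉ WK := fun y η => by simpa using h2 y (-η)
  exact ⟨fun _ hz => ne_zero_of_mem_wfComp h2' hz,
    fun _ hz _ hl => dilate_mem_wfComp hWKconic hWuconic hz hl,
    fun _ hz hzcl => mem_wfComp_of_mem_closure hs hWKclosed hWKconic h1 h2' hWuclosed hz hzcl⟩

/-- Lemma 4.3: if `WK = WF_g^s(K)` (closed s-conic subset of `T*ℝ^{2d} \ {0}`, points
written `((x,y),(ξ,η))`) satisfies `WF_{g,1}^s(K) = WF_{g,2}^s(K) = ∅`, and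
`Wu = WF_g^s(u)` is a closed s-conic subset of `T*ℝ^d \ {0}`, then
`WK' ∘ Wu = {(x,ξ) : ∃(y,η) ∈ Wu, (x,y,ξ,−η) ∈ WK}` is an s-conic subset of
`T*ℝ^d \ {0}` that is closed in `T*ℝ^d \ {0}`. -/
theorem relation_composition_closed_sconic (d : ℕ) (s : ℝ) (hs : 0 < s)
    (WK : Set ((EuclideanSpace ℝ (Fin d) × EuclideanSpace ℝ (Fin d)) ×
               (EuclideanSpace ℝ (Fin d) × EuclideanSpace ℝ (Fin d))))
    (hWK0 : ∀ z ∈ WK, z ≠ 0)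
    (hWKclosed : ∀ z, z ≠ 0 → z ∈ closure WK → z ∈ WK)
    (hWKconic : ∀ x y ξ η, ((x, y), (ξ, η)) ∈ WK → ∀ l : ℝ, 0 < l →
      ((l • x, l • y), (l ^ s • ξ, l ^ s • η)) ∈ WK)
    (h1 : ∀ x ξ : EuclideanSpace ℝ (Fin d), ((x, (0 : EuclideanSpace ℝ (Fin d))),
      (ξ, (0 : EuclideanSpace ℝ (Fin d)))) ∉ WK)
    (h2 : ∀ y η : EuclideanSpace ℝ (Fin d), (((0 : EuclideanSpace ℝ (Fin d)), y),
      ((0 : EuclideanSpace ℝ (Fin d)), -η)) ∉ WK)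
    (Wu : Set (EuclideanSpace ℝ (Fin d) × EuclideanSpace ℝ (Fin d)))
    (hWu0 : ∀ z ∈ Wu, z ≠ 0)
    (hWuclosed : ∀ z, z ≠ 0 → z ∈ closure Wu → z ∈ Wu)
    (hWuconic : ∀ z ∈ Wu, ∀ l : ℝ, 0 < l → ((l • z.1, l ^ s • z.2) : _) ∈ Wu) :
    (∀ z ∈ {w : EuclideanSpace ℝ (Fin d) × EuclideanSpace ℝ (Fin d) |
        ∃ y η, (y, η) ∈ Wu ∧ ((w.1, y), (w.2, -η)) ∈ WK}, z ≠ 0) ∧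
    (∀ z ∈ {w : EuclideanSpace ℝ (Fin d) × EuclideanSpace ℝ (Fin d) |
        ∃ y η, (y, η) ∈ Wu ∧ ((w.1, y), (w.2, -η)) ∈ WK}, ∀ l : ℝ, 0 < l →
        ((l • z.1, l ^ s • z.2) : _) ∈ {w : EuclideanSpace ℝ (Fin d) × EuclideanSpace ℝ (Fin d) |
          ∃ y η, (y, η) ∈ Wu ∧ ((w.1, y), (w.2, -η)) ∈ WK}) ∧
    (∀ z, z ≠ 0 →
      z ∈ closure {w : EuclideanSpace ℝ (Fin d) × EuclideanSpace ℝ (Fin d) |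
        ∃ y η, (y, η) ∈ Wu ∧ ((w.1, y), (w.2, -η)) ∈ WK} →
      z ∈ {w : EuclideanSpace ℝ (Fin d) × EuclideanSpace ℝ (Fin d) |
        ∃ y η, (y, η) ∈ Wu ∧ ((w.1, y), (w.2, -η)) ∈ WK}) :=
  relation_composition_closed_sconic_general d s hs WK hWKclosed hWKconic h1 h2 Wu hWuclosed
    hWuconic
end
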